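/- Let X and Z be standard Borel spaces, let p and q be probability measures on X × Z with z-marginals p_z and q_z, let c_x : X × Z → ℝ be a bounded measurable function, let C_z : Z × Z → ℝ be a bounded measurable nonnegative cost on the latent space, and let λ ≥ 0. Then the Wasserstein-autoencoder objective decomposes as: inf_{γ ∈ Γ[p,q]} ∫ [ c_x(x₂, z₂) + λ C_z(z₁, z₂) ] dγ((x₁,z₁),(x₂,z₂)) = ∫ c_x(x,z) dq(x,z) + λ · inf_{γ_z ∈ Γ[p_z, q_z]} ∫ C_z(z₁,z₂) dγ_z(z₁,z₂). -/

import Mathlib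

/-!
Every coupling `γ` of `p` and `q` has second marginal `q`, so its reconstruction term is
`∫ c_x dq` whatever `γ` is, and its latent term only sees the image coupling of `p_z` and `q_z`.
Conversely every coupling `ρ` of `p_z` and `q_z` is such an image: disintegrate `p` and `q`
along `z` and glue the conditional laws `p(· | z₁)` and `q(· | z₂)` over `ρ`. So the set of
objective values is the image of the set of latent costs under `r ↦ ∫ c_x dq + λ r`, a monotone
continuous map for `λ ≥ 0`, which therefore commutes with the infimum.
-/

open MeasureTheory

/-- The set of couplings `Γ[μ,ν]`: probability measures on `Y × Y` whose first marginal is `μ`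
and whose second marginal is `ν`. -/
def couplings {Y : Type*} [MeasurableSpace Y] (μ ν : Measure Y) : Set (Measure (Y × Y)) :=
  {γ | IsProbabilityMeasure γ ∧ γ.map Prod.fst = μ ∧ γ.map Prod.snd = ν}

open ProbabilityTheory

lemma Real.sInf_image_add_mul {S : Set ℝ} (hne : S.Nonempty) (hbdd : BddBelow S) (a : ℝ) {b : ℝ}
    (hb : 0 ≤ b) : sInf ((fun r => a + b * r) '' S) = a + b * sInf S :=
  (Monotone.map_csInf_of_continuousAt (by fun_prop)
    (fun _ _ h => add_le_add_right (mul_le_mul_of_nonneg_left h hb) a) hne hbdd).symm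

namespace ProbabilityTheory.Kernel

variable {α β γ δ ε ζ : Type*} [MeasurableSpace α] [MeasurableSpace β] [MeasurableSpace γ]
  [MeasurableSpace δ] [MeasurableSpace ε] [MeasurableSpace ζ]

lemma map_parallelComp (κ : Kernel α β) [IsSFiniteKernel κ] (η : Kernel γ δ) [IsSFiniteKernel η]
    {f : β → ε} (hf : Measurable f) {g : δ → ζ} (hg : Measurable g) :
    (κ ∥ₖ η).map (Prod.map f g) = κ.map f ∥ₖ η.map g := by
  ext x : 1
  rw [map_apply _ (hf.prodMap hg), parallelComp_apply, parallelComp_apply, map_apply _ hf,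
    map_apply _ hg, Measure.map_prod_map _ _ hf hg]

lemma fst_parallelComp (κ : Kernel α β) [IsSFiniteKernel κ] (η : Kernel γ δ) [IsMarkovKernel η] :
    (κ ∥ₖ η).fst = κ.comap Prod.fst measurable_fst := by
  ext x : 1
  rw [fst_apply, parallelComp_apply, comap_apply, Measure.map_fst_prod, measure_univ, one_smul]

lemma snd_parallelComp (κ : Kernel α β) [IsMarkovKernel κ] (η : Kernel γ δ) [IsSFiniteKernel η] :
    (κ ∥ₖ η).snd = η.comap Prod.snd measurable_snd := by
  ext x : 1
  rw [snd_apply, parallelComp_apply, comap_apply, Measure.map_snd_prod, measure_univ, one_smul]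

end ProbabilityTheory.Kernel

namespace MeasureTheory.Measure

variable {α β γ δ : Type*} [MeasurableSpace α] [MeasurableSpace β] [MeasurableSpace γ]
  [MeasurableSpace δ]

lemma comap_comp (μ : Measure α) (κ : Kernel β γ) {f : α → β} (hf : Measurable f) :
    κ.comap f hf ∘ₘ μ = κ ∘ₘ μ.map f := by
  rw [← Kernel.comp_deterministic_eq_comap, ← comp_assoc, deterministic_comp_eq_map]

lemma fst_parallelComp_comp (ρ : Measure (α × γ)) (κ : Kernel α β) [IsSFiniteKernel κ]
    (η : Kernel γ δ) [IsMarkovKernel η] : ((κ ∥ₖ η) ∘ₘ ρ).fst = κ ∘ₘ ρ.fst := by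
  rw [Measure.fst, map_comp _ _ measurable_fst, ← Kernel.fst_eq, Kernel.fst_parallelComp,
    comap_comp, Measure.fst]

lemma snd_parallelComp_comp (ρ : Measure (α × γ)) (κ : Kernel α β) [IsMarkovKernel κ]
    (η : Kernel γ δ) [IsSFiniteKernel η] : ((κ ∥ₖ η) ∘ₘ ρ).snd = η ∘ₘ ρ.snd := by
  rw [Measure.snd, map_comp _ _ measurable_snd, ← Kernel.snd_eq, Kernel.snd_parallelComp,
    comap_comp, Measure.snd]

variable {X Z : Type*} [MeasurableSpace X] [StandardBorelSpace X] [Nonempty X]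
  [MeasurableSpace Z] (p : Measure (X × Z)) [IsFiniteMeasure p]

/-- `z ↦ p(· | z) ⊗ δ_z`: the disintegration of `p` along the second coordinate. -/
noncomputable def fiberKernel : Kernel Z (X × Z) :=
  (p.map Prod.swap).condKernel ×ₖ Kernel.id

instance : IsMarkovKernel p.fiberKernel := by
  unfold fiberKernel; infer_instance

lemma fiberKernel_comp_snd : p.fiberKernel ∘ₘ p.snd = p := by
  have hP := (p.map Prod.swap).disintegrate (p.map Prod.swap).condKernel
  rw [fst_map_swap, compProd_eq_comp_prod] at hP
  calc p.fiberKernel ∘ₘ p.snd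
      = (Kernel.map (Kernel.id ×ₖ (p.map Prod.swap).condKernel) Prod.swap) ∘ₘ p.snd := by
        rw [Kernel.map_prod_swap]; rfl
    _ = p := by
        rw [← map_comp _ _ measurable_swap, hP, map_map measurable_swap measurable_swap,
          Prod.swap_swap_eq, map_id]

lemma snd_fiberKernel : p.fiberKernel.snd = Kernel.id :=
  Kernel.snd_prod _ _

end MeasureTheory.Measure

section Couplings

variable {Y W : Type*} [MeasurableSpace Y] [MeasurableSpace W]

lemma prod_mem_couplings (μ ν : Measure Y) [IsProbabilityMeasure μ] [IsProbabilityMeasure ν] :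
    μ.prod ν ∈ couplings μ ν :=
  ⟨inferInstance, by simp, by simp⟩

lemma map_prodMap_mem_couplings {μ ν : Measure Y} {γ : Measure (Y × Y)}
    (hγ : γ ∈ couplings μ ν) {f : Y → W} (hf : Measurable f) :
    γ.map (Prod.map f f) ∈ couplings (μ.map f) (ν.map f) := by
  obtain ⟨hγP, rfl, rfl⟩ := hγ
  refine ⟨Measure.isProbabilityMeasure_map (hf.prodMap hf).aemeasurable, ?_, ?_⟩
  · rw [Measure.map_map measurable_fst (hf.prodMap hf), Measure.map_map hf measurable_fst]
    rfl
  · rw [Measure.map_map measurable_snd (hf.prodMap hf), Measure.map_map hf measurable_snd]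
    rfl

end Couplings

section Objective

variable {Y Z : Type*} [MeasurableSpace Y] [MeasurableSpace Z]

lemma integral_comp_snd_add_mul_comp_prodMap {γ : Measure (Y × Y)} {f : Y → Z}
    (hf : Measurable f) {c : Y → ℝ} (hc : Integrable c γ.snd) {C : Z × Z → ℝ}
    (hC : Integrable C (γ.map (Prod.map f f))) (lam : ℝ) :
    ∫ y, (c y.2 + lam * C (f y.1, f y.2)) ∂γ
      = ∫ y, c y ∂γ.snd + lam * ∫ z, C z ∂(γ.map (Prod.map f f)) := by
  have hc' : Integrable (fun y => c y.2) γ := hc.comp_measurable measurable_snd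
  have hC' : Integrable (fun y => C (f y.1, f y.2)) γ := hC.comp_measurable (hf.prodMap hf)
  rw [integral_add hc' (hC'.const_mul lam), integral_const_mul, Measure.snd,
    integral_map measurable_snd.aemeasurable hc.aestronglyMeasurable,
    integral_map (hf.prodMap hf).aemeasurable hC.aestronglyMeasurable]
  rfl

end Objective

section LatentProjection

variable {X Z : Type*} [MeasurableSpace X] [StandardBorelSpace X] [MeasurableSpace Z]
  {p q : Measure (X × Z)} [IsProbabilityMeasure p] [IsProbabilityMeasure q]

theorem exists_mem_couplings_map_prodMap_snd_eq {ρ : Measure (Z × Z)}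
    (hρ : ρ ∈ couplings p.snd q.snd) :
    ∃ γ ∈ couplings p q, γ.map (Prod.map Prod.snd Prod.snd) = ρ := by
  obtain ⟨hρP, hρ_fst, hρ_snd⟩ := hρ
  have : Nonempty X := (nonempty_prod.1 (nonempty_of_isProbabilityMeasure p)).1
  refine ⟨(p.fiberKernel ∥ₖ q.fiberKernel) ∘ₘ ρ, ⟨inferInstance, ?_, ?_⟩, ?_⟩
  · rw [← Measure.fst, Measure.fst_parallelComp_comp, Measure.fst, hρ_fst,
      Measure.fiberKernel_comp_snd]
  · rw [← Measure.snd, Measure.snd_parallelComp_comp, Measure.snd, hρ_snd,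
      Measure.fiberKernel_comp_snd]
  · rw [Measure.map_comp _ _ (measurable_snd.prodMap measurable_snd),
      Kernel.map_parallelComp _ _ measurable_snd measurable_snd, ← Kernel.snd_eq,
      ← Kernel.snd_eq, Measure.snd_fiberKernel, Measure.snd_fiberKernel,
      Kernel.id_parallelComp_id, Measure.id_comp]

theorem setOf_integral_couplings_eq_image {c : X × Z → ℝ} (hc : Integrable c q)
    {C : Z × Z → ℝ} (hC : Measurable C) {M : ℝ} (hCM : ∀ z, |C z| ≤ M) (lam : ℝ) :
    {r : ℝ | ∃ γ ∈ couplings p q,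
        r = ∫ y : (X × Z) × (X × Z), (c y.2 + lam * C (y.1.2, y.2.2)) ∂γ}
      = (fun r => (∫ y, c y ∂q) + lam * r) ''
          {r : ℝ | ∃ ρ ∈ couplings p.snd q.snd, r = ∫ z, C z ∂ρ} := by
  have hC_int (ρ : Measure (Z × Z)) [IsProbabilityMeasure ρ] : Integrable C ρ :=
    .of_bound hC.aestronglyMeasurable M (ae_of_all _ hCM)
  have objective {γ : Measure ((X × Z) × (X × Z))} (hγ : γ ∈ couplings p q) :
      ∫ y, (c y.2 + lam * C (y.1.2, y.2.2)) ∂γ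
        = (∫ y, c y ∂q) + lam * ∫ z, C z ∂(γ.map (Prod.map Prod.snd Prod.snd)) := by
    have : IsProbabilityMeasure (γ.map (Prod.map Prod.snd Prod.snd)) :=
      (map_prodMap_mem_couplings hγ measurable_snd).1
    rw [← hγ.2.2] at hc ⊢
    exact integral_comp_snd_add_mul_comp_prodMap measurable_snd hc (hC_int _) lam
  ext r
  constructor
  · rintro ⟨γ, hγ, rfl⟩
    exact ⟨_, ⟨_, map_prodMap_mem_couplings hγ measurable_snd, rfl⟩, (objective hγ).symm⟩
  · rintro ⟨_, ⟨ρ, hρ, rfl⟩, rfl⟩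
    obtain ⟨γ, hγ, rfl⟩ := exists_mem_couplings_map_prodMap_snd_eq hρ
    exact ⟨γ, hγ, (objective hγ).symm⟩

end LatentProjection

theorem wasserstein_autoencoder_decomposition_general
    {X Z : Type*} [MeasurableSpace X] [StandardBorelSpace X]
    [MeasurableSpace Z]
    (p q : Measure (X × Z)) [IsProbabilityMeasure p] [IsProbabilityMeasure q]
    (c_x : X × Z → ℝ) (hc_meas : Measurable c_x) (M_x : ℝ) (hc_bdd : ∀ y, |c_x y| ≤ M_x)
    (C_z : Z × Z → ℝ) (hCz_meas : Measurable C_z) (M_z : ℝ) (hCz_bdd : ∀ y, |C_z y| ≤ M_z)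
    (hCz_nonneg : ∀ z₁ z₂ : Z, 0 ≤ C_z (z₁, z₂))
    (lam : ℝ) (hlam : 0 ≤ lam) :
    sInf {r : ℝ | ∃ γ ∈ couplings p q,
        r = ∫ y : (X × Z) × (X × Z), (c_x y.2 + lam * C_z (y.1.2, y.2.2)) ∂γ}
      = (∫ y : X × Z, c_x y ∂q)
        + lam * sInf {r : ℝ | ∃ γz ∈ couplings (p.map Prod.snd) (q.map Prod.snd),
            r = ∫ z : Z × Z, C_z z ∂γz} := by
  have hc_int : Integrable c_x q :=
    .of_bound hc_meas.aestronglyMeasurable M_x (ae_of_all _ hc_bdd)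
  have hne : {r : ℝ | ∃ γz ∈ couplings p.snd q.snd, r = ∫ z, C_z z ∂γz}.Nonempty :=
    ⟨_, _, prod_mem_couplings p.snd q.snd, rfl⟩
  have hbdd : BddBelow {r : ℝ | ∃ γz ∈ couplings p.snd q.snd, r = ∫ z, C_z z ∂γz} := by
    refine ⟨0, ?_⟩
    rintro _ ⟨γz, -, rfl⟩
    exact integral_nonneg fun z => hCz_nonneg z.1 z.2
  rw [setOf_integral_couplings_eq_image hc_int hCz_meas hCz_bdd lam,
    Real.sInf_image_add_mul hne hbdd _ hlam]
  rfl

/-- **Decomposition of the Wasserstein-autoencoder objective.** For standard Borel `X, Z`,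
probability measures `p, q` on `X × Z`, bounded measurable `c_x : X × Z → ℝ`, bounded
measurable nonnegative latent cost `C_z : Z × Z → ℝ`, and `λ ≥ 0`:
`inf_{γ ∈ Γ[p,q]} ∫ [c_x(x₂,z₂) + λ C_z(z₁,z₂)] dγ
  = ∫ c_x dq + λ · inf_{γ_z ∈ Γ[p_z,q_z]} ∫ C_z dγ_z`. -/
theorem wasserstein_autoencoder_decomposition
    {X Z : Type*} [MeasurableSpace X] [StandardBorelSpace X]
    [MeasurableSpace Z] [StandardBorelSpace Z]
    (p q : Measure (X × Z)) [IsProbabilityMeasure p] [IsProbabilityMeasure q]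
    (c_x : X × Z → ℝ) (hc_meas : Measurable c_x) (M_x : ℝ) (hc_bdd : ∀ y, |c_x y| ≤ M_x)
    (C_z : Z × Z → ℝ) (hCz_meas : Measurable C_z) (M_z : ℝ) (hCz_bdd : ∀ y, |C_z y| ≤ M_z)
    (hCz_nonneg : ∀ z₁ z₂ : Z, 0 ≤ C_z (z₁, z₂))
    (lam : ℝ) (hlam : 0 ≤ lam) :
    sInf {r : ℝ | ∃ γ ∈ couplings p q,
        r = ∫ y : (X × Z) × (X × Z), (c_x y.2 + lam * C_z (y.1.2, y.2.2)) ∂γ}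
      = (∫ y : X × Z, c_x y ∂q)
        + lam * sInf {r : ℝ | ∃ γz ∈ couplings (p.map Prod.snd) (q.map Prod.snd),
            r = ∫ z : Z × Z, C_z z ∂γz} :=
  wasserstein_autoencoder_decomposition_general p q c_x hc_meas M_x hc_bdd C_z hCz_meas M_z hCz_bdd
    hCz_nonneg lam hlam
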